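/- Fix γ > 0 and let ℓ₁ > ℓ > 1. Set ν = ν₋(A(ℓ₁, η₁*(ℓ₁;γ); γ)) and η = (ν − b(ℓ;γ))/(a(ℓ;γ) − 1/(ℓν)) (the denominator is nonzero). Then ν₋(A(ℓ, η; γ)) = ν, and moreover η < 1 if and only if ℓ < 1/ν. -/

import Mathlib

open Real Matrix

/-- Cosine `c(ℓ;γ)` from spiked covariance asymptotics. -/
noncomputable def cP (γ ℓ : ℝ) : ℝ :=
  if 1 + Real.sqrt γ < ℓ then Real.sqrt ((1 - γ / (ℓ - 1) ^ 2) / (1 + γ / (ℓ - 1))) else 0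

/-- Sine `s(ℓ;γ) = sqrt(1 - c²)`. -/
noncomputable def sP (γ ℓ : ℝ) : ℝ := Real.sqrt (1 - (cP γ ℓ) ^ 2)

/-- The 2×2 block `A(ℓ,η;γ)` of the asymptotic pivot. -/
noncomputable def Amat (γ ℓ η : ℝ) : Matrix (Fin 2) (Fin 2) ℝ :=
  !![(η * (cP γ ℓ) ^ 2 + (sP γ ℓ) ^ 2) / ℓ, (η - 1) * cP γ ℓ * sP γ ℓ / Real.sqrt ℓ;
     (η - 1) * cP γ ℓ * sP γ ℓ / Real.sqrt ℓ, (cP γ ℓ) ^ 2 + η * (sP γ ℓ) ^ 2]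

/-- Largest eigenvalue `ν₊(A(ℓ,η;γ))` (supremum of the real spectrum). -/
noncomputable def nuP (γ ℓ η : ℝ) : ℝ := sSup (spectrum ℝ (Amat γ ℓ η))

/-- Smallest eigenvalue `ν₋(A(ℓ,η;γ))` (infimum of the real spectrum). -/
noncomputable def nuM (γ ℓ η : ℝ) : ℝ := sInf (spectrum ℝ (Amat γ ℓ η))

/-- Threshold `ℓ₁⁺(γ) = 1 + (γ + sqrt(γ² + 8γ))/2`. -/
noncomputable def ellOnePlus (γ : ℝ) : ℝ := 1 + (γ + Real.sqrt (γ ^ 2 + 8 * γ)) / 2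

/-- Optimal single-spike shrinker `η₁*(ℓ;γ)`. -/
noncomputable def eta1star (γ ℓ : ℝ) : ℝ :=
  if ellOnePlus γ < ℓ then ℓ / (1 + γ + 2 * γ / (ℓ - 1)) else 1

/-- Optimal single-spike loss `κ₁*(ℓ;γ)`. -/
noncomputable def kappa1star (γ ℓ : ℝ) : ℝ :=
  nuP γ ℓ (eta1star γ ℓ) / nuM γ ℓ (eta1star γ ℓ)

/-- `a(ℓ;γ) = c²/ℓ + s²`. -/
noncomputable def aP (γ ℓ : ℝ) : ℝ := (cP γ ℓ) ^ 2 / ℓ + (sP γ ℓ) ^ 2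

/-- `b(ℓ;γ) = s²/ℓ + c²`. -/
noncomputable def bP (γ ℓ : ℝ) : ℝ := (sP γ ℓ) ^ 2 / ℓ + (cP γ ℓ) ^ 2

/-- Multi-spike condition-number objective `K_r((ℓᵢ),(ηᵢ);γ)`. -/
noncomputable def Kr (γ : ℝ) {r : ℕ} (ℓ η : Fin r → ℝ) : ℝ :=
  max 1 (⨆ i, nuP γ (ℓ i) (η i)) / min 1 (⨅ i, nuM γ (ℓ i) (η i))

lemma spectrum_two (p q r : ℝ) :
    spectrum ℝ !![p, q; q, r] = {x : ℝ | (x - p) * (x - r) - q * q = 0} := by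
  ext x
  rw [spectrum.mem_iff, Matrix.isUnit_iff_isUnit_det, isUnit_iff_ne_zero, not_not,
    Set.mem_setOf_eq]
  have : ((algebraMap ℝ (Matrix (Fin 2) (Fin 2) ℝ)) x - !![p, q; q, r]).det
      = (x - p) * (x - r) - q * q := by
    simp [Matrix.det_fin_two, Matrix.algebraMap_eq_diagonal]
  rw [this]

lemma quad_set (T D r₁ r₂ : ℝ) (h : ∀ x : ℝ, x ^ 2 - T * x + D = (x - r₁) * (x - r₂)) :
    {x : ℝ | x ^ 2 - T * x + D = 0} = {r₁, r₂} := by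
  ext x
  simp only [Set.mem_setOf_eq, h x, mul_eq_zero, sub_eq_zero, Set.mem_insert_iff,
    Set.mem_singleton_iff]

lemma cP_sq_le_one (γ ℓ : ℝ) (hγ : 0 < γ) : cP γ ℓ ^ 2 ≤ 1 := by
  unfold cP
  split_ifs with h
  · have hg0 := Real.sqrt_nonneg γ
    have hℓ1 : Real.sqrt γ < ℓ - 1 := by linarith
    have hℓ0 : 0 < ℓ - 1 := by linarith
    have hγlt : γ < (ℓ - 1) ^ 2 := by nlinarith [Real.sq_sqrt hγ.le]
    have hA : 0 ≤ 1 - γ / (ℓ - 1) ^ 2 := by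
      rw [sub_nonneg, div_le_one (by positivity)]; linarith
    have hB : 0 < 1 + γ / (ℓ - 1) := by
      have : 0 < γ / (ℓ - 1) := div_pos hγ hℓ0
      linarith
    rw [Real.sq_sqrt (div_nonneg hA hB.le), div_le_one hB]
    have h1 : 0 ≤ γ / (ℓ - 1) ^ 2 := by positivity
    have h2 : 0 ≤ γ / (ℓ - 1) := le_of_lt (div_pos hγ hℓ0)
    linarith
  · norm_num

lemma sP_sq (γ ℓ : ℝ) (hγ : 0 < γ) : sP γ ℓ ^ 2 = 1 - cP γ ℓ ^ 2 :=
  Real.sq_sqrt (by linarith [cP_sq_le_one γ ℓ hγ])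

lemma spectrum_Amat (γ ℓ η : ℝ) (hγ : 0 < γ) (hℓ : 1 < ℓ) :
    spectrum ℝ (Amat γ ℓ η)
      = {x : ℝ | x ^ 2 - (η * aP γ ℓ + bP γ ℓ) * x + η / ℓ = 0} := by
  have hℓ0 : (0:ℝ) < ℓ := by linarith
  have hs2 : sP γ ℓ ^ 2 = 1 - cP γ ℓ ^ 2 := sP_sq γ ℓ hγ
  have hsq : Real.sqrt ℓ * Real.sqrt ℓ = ℓ := Real.mul_self_sqrt hℓ0.le
  have hq : ((η - 1) * cP γ ℓ * sP γ ℓ / Real.sqrt ℓ) *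
      ((η - 1) * cP γ ℓ * sP γ ℓ / Real.sqrt ℓ)
      = (η - 1) ^ 2 * cP γ ℓ ^ 2 * (1 - cP γ ℓ ^ 2) / ℓ := by
    rw [div_mul_div_comm, hsq, ← hs2]; ring
  rw [Amat, spectrum_two]
  ext x
  simp only [Set.mem_setOf_eq, aP, bP]
  rw [hq, hs2]
  constructor <;> intro h <;> [skip; skip] <;>
    · field_simp at h ⊢
      linear_combination h

lemma nuM_eq_of (γ ℓ η ν : ℝ) (hγ : 0 < γ) (hℓ : 1 < ℓ)
    (hroot : ν ^ 2 - (η * aP γ ℓ + bP γ ℓ) * ν + η / ℓ = 0)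
    (hle : 2 * ν ≤ η * aP γ ℓ + bP γ ℓ) : nuM γ ℓ η = ν := by
  have hfac : ∀ x : ℝ, x ^ 2 - (η * aP γ ℓ + bP γ ℓ) * x + η / ℓ
      = (x - ν) * (x - ((η * aP γ ℓ + bP γ ℓ) - ν)) := fun x => by linear_combination hroot
  rw [nuM, spectrum_Amat γ ℓ η hγ hℓ, quad_set _ _ _ _ hfac, csInf_pair,
    min_eq_left (by linarith)]

lemma nuM_spec (γ ℓ η : ℝ) (hγ : 0 < γ) (hℓ : 1 < ℓ)
    (hΔ : 0 ≤ (η * aP γ ℓ + bP γ ℓ) ^ 2 - 4 * (η / ℓ)) :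
    (nuM γ ℓ η) ^ 2 - (η * aP γ ℓ + bP γ ℓ) * (nuM γ ℓ η) + η / ℓ = 0 ∧
      2 * (nuM γ ℓ η) ≤ η * aP γ ℓ + bP γ ℓ := by
  set T := η * aP γ ℓ + bP γ ℓ with hT
  set D := η / ℓ with hD
  have hs : Real.sqrt (T ^ 2 - 4 * D) ^ 2 = T ^ 2 - 4 * D := Real.sq_sqrt hΔ
  have h1 : 0 ≤ Real.sqrt (T ^ 2 - 4 * D) := Real.sqrt_nonneg _
  have hfac : ∀ x : ℝ, x ^ 2 - T * x + D
      = (x - (T - Real.sqrt (T ^ 2 - 4 * D)) / 2) * (x - (T + Real.sqrt (T ^ 2 - 4 * D)) / 2) :=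
    fun x => by linear_combination hs / 4
  have : nuM γ ℓ η = (T - Real.sqrt (T ^ 2 - 4 * D)) / 2 := by
    rw [nuM, spectrum_Amat γ ℓ η hγ hℓ, ← hT, ← hD, quad_set _ _ _ _ hfac, csInf_pair,
      min_eq_left (by linarith)]
  rw [this]
  constructor
  · linear_combination hs / 4
  · linarith

lemma root_lt {T D ν u : ℝ} (hroot : ν ^ 2 - T * ν + D = 0) (hle : 2 * ν ≤ T)
    (hu : u ^ 2 - T * u + D < 0) : ν < u := by
  by_contra h
  push_neg at h
  nlinarith [mul_nonneg (sub_nonneg.2 h) (by linarith : 0 ≤ T - u - ν)]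

lemma cP_sq_super (γ x : ℝ) (hγ : 0 < γ) (hx : Real.sqrt γ < x) :
    cP γ (x + 1) ^ 2 = (x ^ 2 - γ) / (x * (x + γ)) := by
  have hg0 := Real.sqrt_nonneg γ
  have hx0 : 0 < x := lt_of_le_of_lt hg0 hx
  have hγx : γ < x ^ 2 := by nlinarith [Real.sq_sqrt hγ.le]
  have hcond : 1 + Real.sqrt γ < x + 1 := by linarith
  unfold cP
  rw [if_pos hcond, show x + 1 - 1 = x by ring]
  have hA : 0 ≤ 1 - γ / x ^ 2 := by rw [sub_nonneg, div_le_one (by positivity)]; linarith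
  have hB : 0 < 1 + γ / x := by have : 0 < γ / x := div_pos hγ hx0; linarith
  rw [Real.sq_sqrt (div_nonneg hA hB.le)]
  field_simp

lemma sP_sq_super (γ x : ℝ) (hγ : 0 < γ) (hx : Real.sqrt γ < x) :
    sP γ (x + 1) ^ 2 = γ * (x + 1) / (x * (x + γ)) := by
  have hx0 : 0 < x := lt_of_le_of_lt (Real.sqrt_nonneg γ) hx
  rw [sP_sq γ (x + 1) hγ, cP_sq_super γ x hγ hx]
  field_simp
  ring

lemma la_super (γ x : ℝ) (hγ : 0 < γ) (hx : Real.sqrt γ < x) :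
    (x + 1) * aP γ (x + 1) = ((1 + γ) * x + 2 * γ) / (x + γ) := by
  have hx0 : 0 < x := lt_of_le_of_lt (Real.sqrt_nonneg γ) hx
  simp only [aP]
  rw [cP_sq_super γ x hγ hx, sP_sq_super γ x hγ hx]
  field_simp
  ring

lemma bP_super (γ x : ℝ) (hγ : 0 < γ) (hx : Real.sqrt γ < x) :
    bP γ (x + 1) = x / (x + γ) := by
  have hx0 : 0 < x := lt_of_le_of_lt (Real.sqrt_nonneg γ) hx
  simp only [bP]
  rw [cP_sq_super γ x hγ hx, sP_sq_super γ x hγ hx]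
  field_simp
  ring

lemma ab_sum (γ ℓ : ℝ) (hγ : 0 < γ) (hℓ : 1 < ℓ) : aP γ ℓ + bP γ ℓ = 1 + 1 / ℓ := by
  simp only [aP, bP]
  rw [sP_sq γ ℓ hγ]
  have hℓ0 : (ℓ:ℝ) ≠ 0 := by linarith
  field_simp
  ring

lemma aP_le_one (γ ℓ : ℝ) (hγ : 0 < γ) (hℓ : 1 < ℓ) : aP γ ℓ ≤ 1 := by
  simp only [aP]
  rw [sP_sq γ ℓ hγ]
  have : cP γ ℓ ^ 2 / ℓ ≤ cP γ ℓ ^ 2 := div_le_self (sq_nonneg _) hℓ.le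
  linarith

lemma aP_pos (γ ℓ : ℝ) (hγ : 0 < γ) (hℓ : 1 < ℓ) : 0 < aP γ ℓ := by
  simp only [aP]
  rw [sP_sq γ ℓ hγ]
  have hc1 := cP_sq_le_one γ ℓ hγ
  have h2 : (1 - cP γ ℓ ^ 2) / ℓ ≤ 1 - cP γ ℓ ^ 2 := div_le_self (by linarith) hℓ.le
  have h3 : cP γ ℓ ^ 2 / ℓ + (1 - cP γ ℓ ^ 2) / ℓ = 1 / ℓ := by ring
  have h4 : 0 < 1 / ℓ := by positivity
  linarith

lemma lab_ge (γ ℓ : ℝ) (hγ : 0 < γ) (hℓ : 1 < ℓ) : 1 ≤ ℓ * (aP γ ℓ * bP γ ℓ) := by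
  simp only [aP, bP]
  rw [sP_sq γ ℓ hγ]
  have hc0 := sq_nonneg (cP γ ℓ)
  have hc1 := cP_sq_le_one γ ℓ hγ
  have hℓ0 : (0:ℝ) < ℓ := by linarith
  have expand : ℓ * ((cP γ ℓ ^ 2 / ℓ + (1 - cP γ ℓ ^ 2)) * ((1 - cP γ ℓ ^ 2) / ℓ + cP γ ℓ ^ 2))
      = 1 + cP γ ℓ ^ 2 * (1 - cP γ ℓ ^ 2) * (ℓ - 1) ^ 2 / ℓ := by
    field_simp
    ring
  rw [expand]
  have : 0 ≤ cP γ ℓ ^ 2 * (1 - cP γ ℓ ^ 2) * (ℓ - 1) ^ 2 / ℓ := by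
    apply div_nonneg _ hℓ0.le
    apply mul_nonneg (mul_nonneg hc0 (by linarith)) (sq_nonneg _)
  linarith

set_option maxHeartbeats 2000000 in
/-- with `ν = ν₋(A(ℓ₁,η₁*(ℓ₁;γ);γ))` and
`η = (ν − b)/(a − 1/(ℓν))`, the denominator is nonzero, `ν₋(A(ℓ,η;γ)) = ν`,
and `η < 1 ↔ ℓ < 1/ν`. -/
theorem stmt17 (γ ℓ₁ ℓ : ℝ) (hγ : 0 < γ) (hℓ : 1 < ℓ) (hℓ₁ : ℓ < ℓ₁) :
    aP γ ℓ - 1 / (ℓ * nuM γ ℓ₁ (eta1star γ ℓ₁)) ≠ 0 ∧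
    nuM γ ℓ
        ((nuM γ ℓ₁ (eta1star γ ℓ₁) - bP γ ℓ)
          / (aP γ ℓ - 1 / (ℓ * nuM γ ℓ₁ (eta1star γ ℓ₁))))
      = nuM γ ℓ₁ (eta1star γ ℓ₁) ∧
    ((nuM γ ℓ₁ (eta1star γ ℓ₁) - bP γ ℓ)
          / (aP γ ℓ - 1 / (ℓ * nuM γ ℓ₁ (eta1star γ ℓ₁))) < 1
      ↔ ℓ < 1 / nuM γ ℓ₁ (eta1star γ ℓ₁)) := by
  obtain ⟨x, rfl⟩ : ∃ x, ℓ₁ = x + 1 := ⟨ℓ₁ - 1, by ring⟩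
  obtain ⟨y, rfl⟩ : ∃ y, ℓ = y + 1 := ⟨ℓ - 1, by ring⟩
  have hy0 : 0 < y := by linarith
  have hyx : y < x := by linarith
  have hx0 : 0 < x := by linarith
  have hℓ₁1 : (1:ℝ) < x + 1 := by linarith
  set ν := nuM γ (x + 1) (eta1star γ (x + 1)) with hνdef
  have hg0 := Real.sqrt_nonneg γ
  have hgsq : Real.sqrt γ ^ 2 = γ := Real.sq_sqrt hγ.le
  -- main bounds on ν
  have main : 0 < ν ∧ ν < 1 ∧ ν * ((y + 1) * aP γ (y + 1)) < 1 := by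
    by_cases hcase : ellOnePlus γ < x + 1
    · -- supercritical
      have hxg : Real.sqrt γ < x := by
        have h48 : Real.sqrt (4 * γ) ≤ Real.sqrt (γ ^ 2 + 8 * γ) := by
          apply Real.sqrt_le_sqrt; nlinarith
        have h4 : Real.sqrt (4 * γ) = 2 * Real.sqrt γ := by
          rw [show (4:ℝ) * γ = (2 * Real.sqrt γ) ^ 2 by nlinarith [hgsq]]
          rw [Real.sqrt_sq (by positivity)]
        rw [h4] at h48
        have : 1 + (γ + Real.sqrt (γ ^ 2 + 8 * γ)) / 2 < x + 1 := hcase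
        nlinarith
      have hγx : γ < x ^ 2 := by nlinarith
      have hxγ : (0:ℝ) < x + γ := by linarith
      have hP : (0:ℝ) < (1 + γ) * x + 2 * γ := by nlinarith
      have hηv : eta1star γ (x + 1) = (x + 1) * x / ((1 + γ) * x + 2 * γ) := by
        unfold eta1star
        rw [if_pos hcase, show x + 1 - 1 = x by ring]
        have hden : (0:ℝ) < 1 + γ + 2 * γ / x := by
          have := div_pos (by linarith : (0:ℝ) < 2 * γ) hx0
          linarith
        rw [div_eq_div_iff hden.ne' hP.ne']
        field_simp
      have hT₁ : eta1star γ (x + 1) * aP γ (x + 1) + bP γ (x + 1) = 2 * x / (x + γ) := by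
        have h1 : eta1star γ (x + 1) * aP γ (x + 1)
            = x / ((1 + γ) * x + 2 * γ) * ((x + 1) * aP γ (x + 1)) := by
          rw [hηv]; ring
        rw [h1, la_super γ x hγ hxg, bP_super γ x hγ hxg]
        field_simp
        ring
      have hD₁ : eta1star γ (x + 1) / (x + 1) = x / ((1 + γ) * x + 2 * γ) := by
        rw [hηv]
        field_simp
      have hΔ : 0 ≤ (eta1star γ (x + 1) * aP γ (x + 1) + bP γ (x + 1)) ^ 2
          - 4 * (eta1star γ (x + 1) / (x + 1)) := by
        rw [hT₁, hD₁]
        have heq : (2 * x / (x + γ)) ^ 2 - 4 * (x / ((1 + γ) * x + 2 * γ))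
            = 4 * γ * x * (x ^ 2 - γ) / ((x + γ) ^ 2 * ((1 + γ) * x + 2 * γ)) := by
          field_simp
          ring
        rw [heq]
        apply div_nonneg _ (by positivity)
        have : 0 ≤ x ^ 2 - γ := by linarith
        positivity
      obtain ⟨hroot, hle⟩ := nuM_spec γ (x + 1) (eta1star γ (x + 1)) hγ hℓ₁1 hΔ
      rw [hT₁] at hroot hle
      rw [hD₁] at hroot
      rw [← hνdef] at hroot hle
      have hDpos : 0 < x / ((1 + γ) * x + 2 * γ) := div_pos hx0 hP
      have hTpos : 0 < 2 * x / (x + γ) := by positivity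
      have hν0 : 0 < ν := by nlinarith
      have hν1 : ν < 1 := by
        have : 2 * x / (x + γ) < 2 := by rw [div_lt_iff₀ hxγ]; nlinarith
        linarith
      -- (I)
      have hI : ν < (x + γ) / ((1 + γ) * x + 2 * γ) := by
        apply root_lt hroot hle
        have heq : ((x + γ) / ((1 + γ) * x + 2 * γ)) ^ 2
            - 2 * x / (x + γ) * ((x + γ) / ((1 + γ) * x + 2 * γ))
            + x / ((1 + γ) * x + 2 * γ)
            = (γ ^ 2 - γ * x ^ 2) / ((1 + γ) * x + 2 * γ) ^ 2 := by
          field_simp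
          ring
        rw [heq]
        apply div_neg_of_neg_of_pos _ (by positivity)
        nlinarith
      -- (II)
      have hII : ν < 1 / (1 + Real.sqrt γ) := by
        apply root_lt hroot hle
        set g := Real.sqrt γ with hgdef
        have hγg : γ = g ^ 2 := hgsq.symm
        have hgpos : 0 < g := Real.sqrt_pos.mpr hγ
        rw [hγg]
        have hxg2 : (0:ℝ) < x + g ^ 2 := by nlinarith
        have hP2 : (0:ℝ) < (1 + g ^ 2) * x + 2 * g ^ 2 := by nlinarith
        have heq : (1 / (1 + g)) ^ 2 - 2 * x / (x + g ^ 2) * (1 / (1 + g))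
            + x / ((1 + g ^ 2) * x + 2 * g ^ 2)
            = -(2 * g ^ 3 * (x - g) * (1 + x))
                / ((1 + g) ^ 2 * (x + g ^ 2) * ((1 + g ^ 2) * x + 2 * g ^ 2)) := by
          field_simp
          ring
        rw [heq]
        apply div_neg_of_neg_of_pos _ (by positivity)
        have h7 : 0 < x - g := by linarith
        nlinarith [mul_pos (mul_pos (pow_pos hgpos 3) h7) (show (0:ℝ) < 1 + x by linarith)]
      refine ⟨hν0, hν1, ?_⟩
      -- key bound at ℓ = y+1
      have hII' : ν * (1 + Real.sqrt γ) < 1 := by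
        rw [lt_div_iff₀ (by positivity)] at hII
        exact hII
      by_cases hyc : 1 + Real.sqrt γ < y + 1
      · have hyg : Real.sqrt γ < y := by linarith
        rw [la_super γ y hγ hyg]
        have hyγ : (0:ℝ) < y + γ := by linarith
        rcases le_total γ 1 with h1 | h1
        · have hb : ((1 + γ) * y + 2 * γ) / (y + γ) ≤ 1 + Real.sqrt γ := by
            rw [div_le_iff₀ hyγ]
            have hg1 : Real.sqrt γ ≤ 1 := by nlinarith
            nlinarith [mul_nonneg (sub_nonneg.2 hg1) (sub_nonneg.2 hyg.le)]
          calc ν * (((1 + γ) * y + 2 * γ) / (y + γ))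
              ≤ ν * (1 + Real.sqrt γ) := by
                apply mul_le_mul_of_nonneg_left hb hν0.le
            _ < 1 := hII'
        · have hb : ((1 + γ) * y + 2 * γ) / (y + γ) ≤ ((1 + γ) * x + 2 * γ) / (x + γ) := by
            rw [div_le_div_iff₀ hyγ hxγ]
            nlinarith [mul_nonneg (mul_nonneg hγ.le (sub_nonneg.2 h1)) (sub_nonneg.2 hyx.le)]
          have h5 : ν * ((1 + γ) * x + 2 * γ) < x + γ := (lt_div_iff₀ hP).1 hI
          have hI' : ν * (((1 + γ) * x + 2 * γ) / (x + γ)) < 1 := by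
            rw [← mul_div_assoc, div_lt_one hxγ]
            exact h5
          calc ν * (((1 + γ) * y + 2 * γ) / (y + γ))
              ≤ ν * (((1 + γ) * x + 2 * γ) / (x + γ)) := by
                apply mul_le_mul_of_nonneg_left hb hν0.le
            _ < 1 := hI'
      · have hc0 : cP γ (y + 1) = 0 := by unfold cP; rw [if_neg hyc]
        have ha1 : aP γ (y + 1) = 1 := by
          simp only [aP]
          rw [sP_sq γ (y + 1) hγ, hc0]
          norm_num
        rw [ha1, mul_one]
        have hle' : y + 1 ≤ 1 + Real.sqrt γ := not_lt.1 hyc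
        nlinarith
    · -- subcritical
      have hη1 : eta1star γ (x + 1) = 1 := by unfold eta1star; rw [if_neg hcase]
      have hsum₁ := ab_sum γ (x + 1) hγ hℓ₁1
      have hx1 : (0:ℝ) < x + 1 := by linarith
      have hνval : ν = 1 / (x + 1) := by
        rw [hνdef, hη1]
        apply nuM_eq_of γ (x + 1) 1 (1 / (x + 1)) hγ hℓ₁1
        · rw [one_mul, hsum₁]
          field_simp
          ring
        · rw [one_mul, hsum₁]
          have h5 : 1 / (x + 1) ≤ 1 := by rw [div_le_one hx1]; linarith
          linarith
      have hν0 : 0 < ν := by rw [hνval]; positivity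
      refine ⟨hν0, ?_, ?_⟩
      · rw [hνval, div_lt_one hx1]; linarith
      · have haub := aP_le_one γ (y + 1) hγ hℓ
        have hapos := aP_pos γ (y + 1) hγ hℓ
        rw [hνval, div_mul_eq_mul_div, one_mul, div_lt_one hx1]
        nlinarith
  obtain ⟨hν0, hν1, hkey⟩ := main
  -- common conclusion
  have hνℓ : 0 < (y + 1) * ν := by positivity
  have h1a : (y + 1) * ν * aP γ (y + 1) < 1 := by nlinarith
  have hd : aP γ (y + 1) - 1 / ((y + 1) * ν) < 0 := by
    rw [sub_neg, lt_div_iff₀ hνℓ]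
    nlinarith
  have hdne : aP γ (y + 1) - 1 / ((y + 1) * ν) ≠ 0 := hd.ne
  have hN : 0 < 1 - (y + 1) * ν * aP γ (y + 1) := by linarith
  have hy1 : (y:ℝ) + 1 ≠ 0 := by positivity
  have hηval : (ν - bP γ (y + 1)) / (aP γ (y + 1) - 1 / ((y + 1) * ν))
      = (y + 1) * ν * (bP γ (y + 1) - ν) / (1 - (y + 1) * ν * aP γ (y + 1)) := by
    rw [div_eq_div_iff hdne hN.ne']
    field_simp
    ring
  rw [hηval]
  refine ⟨hdne, ?_, ?_⟩
  · -- nuM at new η equals ν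
    apply nuM_eq_of γ (y + 1) _ ν hγ hℓ
    · have hN' := hN.ne'
      generalize hM : 1 - (y + 1) * ν * aP γ (y + 1) = M at hN' ⊢
      field_simp
      subst hM
      ring
    · have hQ : 0 ≤ (y + 1) * aP γ (y + 1) * ν ^ 2 - 2 * ν + bP γ (y + 1) := by
        nlinarith [sq_nonneg ((y + 1) * aP γ (y + 1) * ν - 1), lab_ge γ (y + 1) hγ hℓ,
          mul_pos (show (0:ℝ) < y + 1 by linarith) (aP_pos γ (y + 1) hγ hℓ)]
      have heq : (y + 1) * ν * (bP γ (y + 1) - ν) / (1 - (y + 1) * ν * aP γ (y + 1))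
            * aP γ (y + 1) + bP γ (y + 1) - 2 * ν
          = ((y + 1) * aP γ (y + 1) * ν ^ 2 - 2 * ν + bP γ (y + 1))
              / (1 - (y + 1) * ν * aP γ (y + 1)) := by
        field_simp
        ring
      have h6 : 0 ≤ (y + 1) * ν * (bP γ (y + 1) - ν) / (1 - (y + 1) * ν * aP γ (y + 1))
          * aP γ (y + 1) + bP γ (y + 1) - 2 * ν := by
        rw [heq]
        exact div_nonneg hQ hN.le
      linarith
  · -- the iff
    have hb' : bP γ (y + 1) = 1 + 1 / (y + 1) - aP γ (y + 1) := by
      linarith [ab_sum γ (y + 1) hγ hℓ]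
    have hdiff : 1 - (y + 1) * ν * aP γ (y + 1) - (y + 1) * ν * (bP γ (y + 1) - ν)
        = (1 - (y + 1) * ν) * (1 - ν) := by
      rw [hb']
      field_simp
      ring
    rw [div_lt_one hN]
    constructor
    · intro h
      have h2 : 0 < (1 - (y + 1) * ν) * (1 - ν) := by linarith
      have h4 : (y + 1) * ν < 1 := by nlinarith
      rw [lt_div_iff₀ hν0]
      linarith
    · intro h
      have h4 : (y + 1) * ν < 1 := by rw [lt_div_iff₀ hν0] at h; linarith
      have h2 : 0 < (1 - (y + 1) * ν) * (1 - ν) :=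
        mul_pos (by linarith) (by linarith)
      linarith
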